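/- Let a be a symbol on ℝ^{2d} satisfying max_{|β|≤d+1} ess sup |∂_ξ^β a(x,ξ)| ⟨ξ⟩^{d+1} =: M^{-(d+1)}_{0,d+1}(a) < ∞. Then for every h ∈ (0,1] the semiclassical operator Op^h(a) u(x) = (2π)^{-d} ∫ e^{i x·ξ} a(x, hξ) û(ξ) dξ, defined initially on Schwartz functions, extends to a bounded operator on L²(ℝ^d) with ‖Op^h(a)‖ ≤ C_d M^{-(d+1)}_{0,d+1}(a), uniformly in h. -/

import Mathlib

open MeasureTheory Complex FourierTransform Real MeasureTheory.Measure
open scoped RealInnerProductSpace ENNReal NNReal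

noncomputable section
set_option synthInstance.maxHeartbeats 1000000
set_option maxHeartbeats 1000000

/-- Fourier transform with the convention `û(ξ) = ∫ e^{-i x·ξ} u(x) dx`. -/
def ft (d : ℕ) (u : EuclideanSpace ℝ (Fin d) → ℂ) (ξ : EuclideanSpace ℝ (Fin d)) : ℂ :=
  ∫ x, Complex.exp (-Complex.I * ((inner ℝ x ξ : ℝ) : ℂ)) * u x

-- B integrable
lemma B_integrable (d : ℕ) :
    Integrable (fun v : EuclideanSpace ℝ (Fin d) ↦ (((1 + ‖v‖) ^ (d+1))⁻¹ : ℝ)) := by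
  have h := integrable_one_add_norm (E := EuclideanSpace ℝ (Fin d)) (μ := volume)
    (r := (d+1 : ℝ)) (by simp [finrank_euclideanSpace_fin])
  refine h.congr (Filter.Eventually.of_forall fun v ↦ ?_)
  have h1 : (0:ℝ) < 1 + ‖v‖ := by positivity
  show (1 + ‖v‖) ^ (-((d:ℝ)+1)) = _
  rw [Real.rpow_neg h1.le]
  norm_cast

lemma IB_nonneg (d : ℕ) :
    0 ≤ ∫ v : EuclideanSpace ℝ (Fin d), (((1 + ‖v‖) ^ (d+1))⁻¹ : ℝ) :=
  integral_nonneg fun v ↦ by positivity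

-- ft in terms of 𝓕
lemma ft_eq (d : ℕ) (u : EuclideanSpace ℝ (Fin d) → ℂ) (ξ : EuclideanSpace ℝ (Fin d)) :
    ft d u ξ = 𝓕 u ((2*π)⁻¹ • ξ) := by
  rw [Real.fourier_eq']
  refine integral_congr_ae (Filter.Eventually.of_forall fun x ↦ ?_)
  show cexp (-I * ((inner ℝ x ξ : ℝ) : ℂ)) * u x = cexp (↑(-2 * π * ⟪x, (2*π)⁻¹ • ξ⟫) * I) • u x
  rw [smul_eq_mul]
  congr 2
  have h2 : ⟪x, (2*π)⁻¹ • ξ⟫ = (2*π)⁻¹ * ⟪x, ξ⟫ := real_inner_smul_right x ξ _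
  rw [h2]
  have h3 : -2 * π * ((2*π)⁻¹ * ⟪x, ξ⟫) = -⟪x, ξ⟫ := by
    have hπ : (π : ℝ) ≠ 0 := Real.pi_ne_zero
    field_simp
  rw [h3]
  push_cast
  ring

-- Schwartz inversion
lemma schwartz_inversion (d : ℕ) (u : SchwartzMap (EuclideanSpace ℝ (Fin d)) ℂ)
    (y : EuclideanSpace ℝ (Fin d)) :
    ∫ ξ, Complex.exp (Complex.I * ((inner ℝ y ξ : ℝ) : ℂ)) * ft d u ξ
      = (((2*π)^d : ℝ) : ℂ) * u y := by
  have hu : Integrable (u : EuclideanSpace ℝ (Fin d) → ℂ) := u.integrable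
  have hFu : Integrable (𝓕 (u : EuclideanSpace ℝ (Fin d) → ℂ)) := by
    have : 𝓕 (u : EuclideanSpace ℝ (Fin d) → ℂ)
        = (SchwartzMap.fourierTransformCLM ℂ u : EuclideanSpace ℝ (Fin d) → ℂ) := by
      rw [SchwartzMap.fourierTransformCLM_apply, SchwartzMap.fourier_coe]
    rw [this]
    exact (SchwartzMap.fourierTransformCLM ℂ u).integrable
  -- the integrand equals g ((2π)⁻¹ • ξ) with g η = 𝐞 ⟪η, y⟫ • 𝓕 u η
  have key : ∀ ξ : EuclideanSpace ℝ (Fin d),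
      Complex.exp (Complex.I * ((inner ℝ y ξ : ℝ) : ℂ)) * ft d u ξ
        = (fun η : EuclideanSpace ℝ (Fin d) ↦
            Complex.exp ((↑(2 * π * ⟪η, y⟫) * Complex.I)) •
              𝓕 (u : EuclideanSpace ℝ (Fin d) → ℂ) η) ((2*π)⁻¹ • ξ) := by
    intro ξ
    rw [ft_eq]
    simp only [smul_eq_mul]
    congr 2
    have h2 : ⟪(2*π)⁻¹ • ξ, y⟫ = (2*π)⁻¹ * ⟪ξ, y⟫ := real_inner_smul_left ξ y _
    rw [h2]
    have h3 : 2 * π * ((2*π)⁻¹ * ⟪ξ, y⟫) = ⟪ξ, y⟫ := by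
      have hπ : (π : ℝ) ≠ 0 := Real.pi_ne_zero
      field_simp
    rw [h3, real_inner_comm ξ y]
    push_cast
    ring
  rw [integral_congr_ae (Filter.Eventually.of_forall key)]
  have hcv := integral_comp_inv_smul_of_nonneg (volume)
    (fun η : EuclideanSpace ℝ (Fin d) ↦
      Complex.exp ((↑(2 * π * ⟪η, y⟫) * Complex.I)) • 𝓕 (u : EuclideanSpace ℝ (Fin d) → ℂ) η)
    (by positivity : (0:ℝ) ≤ 2*π)
  rw [hcv]
  have hinv : ∫ η, Complex.exp ((↑(2 * π * ⟪η, y⟫) * Complex.I)) •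
      𝓕 (u : EuclideanSpace ℝ (Fin d) → ℂ) η = u y := by
    have := (u.continuous.fourierInv_fourier_eq hu hFu)
    have h4 := congrFun this y
    rw [← h4, Real.fourierInv_eq']
  rw [hinv, finrank_euclideanSpace_fin]
  simp [smul_eq_mul]

def IB (d : ℕ) : ℝ := ∫ v : EuclideanSpace ℝ (Fin d), (((1 + ‖v‖) ^ (d+1))⁻¹ : ℝ)

def Cd (d : ℕ) : ℝ := 2^(d+1) * (2^(d+1) + 4^(d+1) * (d+2)) * IB d

lemma Cd_nonneg (d : ℕ) : 0 ≤ Cd d := by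
  have := IB_nonneg d
  unfold Cd IB
  positivity

-- pointwise derivative bound
lemma deriv_bound {d : ℕ} {M : ℝ} {f : EuclideanSpace ℝ (Fin d) → ℂ}
    (hb : ∀ (n : ℕ) (ξ : EuclideanSpace ℝ (Fin d)), n ≤ d + 1 →
      ‖iteratedFDeriv ℝ n f ξ‖ * Real.sqrt (1 + ‖ξ‖ ^ 2) ^ (d + 1) ≤ M)
    {n : ℕ} (hn : n ≤ d + 1) (ξ : EuclideanSpace ℝ (Fin d)) :
    ‖iteratedFDeriv ℝ n f ξ‖ ≤ 2^(d+1) * M * ((1 + ‖ξ‖) ^ (d+1))⁻¹ := by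
  have hs : Real.sqrt (1 + ‖ξ‖ ^ 2) > 0 := Real.sqrt_pos.2 (by positivity)
  have hsq := Real.sq_sqrt (show (0:ℝ) ≤ 1 + ‖ξ‖ ^ 2 by positivity)
  have hsn := Real.sqrt_nonneg (1 + ‖ξ‖ ^ 2)
  have hs1 : (1:ℝ) ≤ Real.sqrt (1 + ‖ξ‖ ^ 2) := by nlinarith [sq_nonneg ‖ξ‖]
  have hs2 : ‖ξ‖ ≤ Real.sqrt (1 + ‖ξ‖ ^ 2) := by
    nlinarith [norm_nonneg ξ, sq_nonneg (Real.sqrt (1 + ‖ξ‖ ^ 2) - ‖ξ‖)]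
  have h12 : 1 + ‖ξ‖ ≤ 2 * Real.sqrt (1 + ‖ξ‖ ^ 2) := by linarith
  have hpow : (1 + ‖ξ‖) ^ (d+1) ≤ 2^(d+1) * Real.sqrt (1 + ‖ξ‖ ^ 2) ^ (d+1) := by
    calc (1 + ‖ξ‖) ^ (d+1) ≤ (2 * Real.sqrt (1 + ‖ξ‖ ^ 2)) ^ (d+1) :=
          pow_le_pow_left₀ (by positivity) h12 _
      _ = 2^(d+1) * Real.sqrt (1 + ‖ξ‖ ^ 2) ^ (d+1) := mul_pow _ _ _
  have hbn := hb n ξ hn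
  have h1ξ : (0:ℝ) < (1 + ‖ξ‖) ^ (d+1) := by positivity
  rw [show (2:ℝ)^(d+1) * M * ((1 + ‖ξ‖) ^ (d+1))⁻¹ = (2^(d+1) * M) / ((1 + ‖ξ‖) ^ (d+1)) by ring,
    le_div_iff₀ h1ξ]
  calc ‖iteratedFDeriv ℝ n f ξ‖ * (1 + ‖ξ‖) ^ (d+1)
      ≤ ‖iteratedFDeriv ℝ n f ξ‖ * (2^(d+1) * Real.sqrt (1 + ‖ξ‖ ^ 2) ^ (d+1)) :=
        mul_le_mul_of_nonneg_left hpow (norm_nonneg _)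
    _ = 2^(d+1) * (‖iteratedFDeriv ℝ n f ξ‖ * Real.sqrt (1 + ‖ξ‖ ^ 2) ^ (d+1)) := by ring
    _ ≤ 2^(d+1) * M := mul_le_mul_of_nonneg_left hbn (by positivity)

lemma deriv_integrable {d : ℕ} {M : ℝ} {f : EuclideanSpace ℝ (Fin d) → ℂ}
    (hf : ContDiff ℝ (d + 1) f)
    (hb : ∀ (n : ℕ) (ξ : EuclideanSpace ℝ (Fin d)), n ≤ d + 1 →
      ‖iteratedFDeriv ℝ n f ξ‖ * Real.sqrt (1 + ‖ξ‖ ^ 2) ^ (d + 1) ≤ M)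
    {n : ℕ} (hn : n ≤ d + 1) :
    Integrable (iteratedFDeriv ℝ n f) volume := by
  have hc : Continuous (iteratedFDeriv ℝ n f) :=
    hf.continuous_iteratedFDeriv (by exact_mod_cast hn)
  refine ((B_integrable d).const_mul (2^(d+1) * M)).mono' hc.aestronglyMeasurable
    (Filter.Eventually.of_forall fun ξ ↦ ?_)
  simpa [mul_assoc] using deriv_bound hb hn ξ

lemma integral_deriv_le {d : ℕ} {M : ℝ} {f : EuclideanSpace ℝ (Fin d) → ℂ}
    (hf : ContDiff ℝ (d + 1) f)
    (hb : ∀ (n : ℕ) (ξ : EuclideanSpace ℝ (Fin d)), n ≤ d + 1 →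
      ‖iteratedFDeriv ℝ n f ξ‖ * Real.sqrt (1 + ‖ξ‖ ^ 2) ^ (d + 1) ≤ M)
    {n : ℕ} (hn : n ≤ d + 1) :
    ∫ ξ, ‖iteratedFDeriv ℝ n f ξ‖ ≤ 2^(d+1) * M * IB d := by
  have h1 := (deriv_integrable hf hb hn).norm
  have h2 := (B_integrable d).const_mul (2^(d+1) * M)
  calc ∫ ξ, ‖iteratedFDeriv ℝ n f ξ‖
      ≤ ∫ ξ : EuclideanSpace ℝ (Fin d), 2^(d+1) * M * ((1 + ‖ξ‖) ^ (d+1))⁻¹ :=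
        integral_mono h1 h2 (fun ξ ↦ deriv_bound hb hn ξ)
    _ = 2^(d+1) * M * IB d := by rw [integral_const_mul]; rfl

lemma kernel_decay {d : ℕ} {M : ℝ} {f : EuclideanSpace ℝ (Fin d) → ℂ}
    (hf : ContDiff ℝ (d + 1) f)
    (hb : ∀ (n : ℕ) (ξ : EuclideanSpace ℝ (Fin d)), n ≤ d + 1 →
      ‖iteratedFDeriv ℝ n f ξ‖ * Real.sqrt (1 + ‖ξ‖ ^ 2) ^ (d + 1) ≤ M)
    (w : EuclideanSpace ℝ (Fin d)) :
    ‖𝓕 f w‖ ≤ Cd d * M * ((1 + ‖w‖) ^ (d+1))⁻¹ := by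
  have hM : 0 ≤ M := le_trans (by positivity) (hb 0 0 (by omega))
  -- integrability hypothesis for the mathlib lemma
  have h'f : ∀ (k n : ℕ), (k:ℕ∞) ≤ (0:ℕ) → (n:ℕ∞) ≤ (d+1:ℕ) →
      Integrable (fun v ↦ ‖v‖^k * ‖iteratedFDeriv ℝ n f v‖) volume := by
    intro k n hk hn
    have hk0 : k = 0 := Nat.le_zero.1 (by exact_mod_cast hk)
    have hn' : n ≤ d + 1 := by exact_mod_cast hn
    subst hk0
    simpa using (deriv_integrable hf hb hn').norm
  -- bound on ∫ ‖f‖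
  have h0 : ‖𝓕 f w‖ ≤ 2^(d+1) * M * IB d := by
    refine le_trans (VectorFourier.norm_fourierIntegral_le_integral_norm _ _ _ _ _) ?_
    exact integral_deriv_le hf hb (Nat.zero_le _) |>.trans_eq' (by simp [norm_iteratedFDeriv_zero])
  -- bound on ‖w‖^{d+1} ‖𝓕 f w‖
  have h1 : ‖w‖^(d+1) * ‖𝓕 f w‖ ≤ 2^(d+1) * ((d+2) * (2^(d+1) * M * IB d)) := by
    have H := Real.pow_mul_norm_iteratedFDeriv_fourier_le (K := (0:ℕ)) (N := ((d+1:ℕ):ℕ∞))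
      hf h'f (le_refl _) (le_refl _) w (k := 0) (n := d+1)
    simp only [pow_zero, one_mul, norm_iteratedFDeriv_zero] at H
    refine H.trans ?_
    have hcast : ((2:ℝ) * (0:ℕ) + 2) ^ (d+1) = 2^(d+1) := by norm_num
    rw [hcast]
    refine mul_le_mul_of_nonneg_left ?_ (by positivity)
    rw [Finset.range_one, Finset.singleton_product, Finset.sum_map]
    simp only [Function.Embedding.coeFn_mk, pow_zero, one_mul]
    calc ∑ b ∈ Finset.range (d+2), ∫ v, ‖iteratedFDeriv ℝ b f v‖
        ≤ ∑ _b ∈ Finset.range (d+2), 2^(d+1) * M * IB d :=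
          Finset.sum_le_sum fun b hb' ↦
            integral_deriv_le hf hb (by simpa using Nat.lt_succ_iff.1 (Finset.mem_range.1 hb'))
      _ = (d+2) * (2^(d+1) * M * IB d) := by
          rw [Finset.sum_const, Finset.card_range]; push_cast; ring
  -- combine
  have hIB := IB_nonneg d
  have hFn : (0:ℝ) ≤ ‖𝓕 f w‖ := norm_nonneg _
  have hkey : ‖𝓕 f w‖ * (1 + ‖w‖)^(d+1) ≤ Cd d * M := by
    have hsplit : (1 + ‖w‖)^(d+1) ≤ 2^(d+1) * (1 + ‖w‖^(d+1)) := by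
      rcases le_total ‖w‖ 1 with ht | ht
      · have : (1 + ‖w‖)^(d+1) ≤ 2^(d+1) :=
          pow_le_pow_left₀ (by positivity) (by linarith) _
        nlinarith [pow_nonneg (norm_nonneg w) (d+1), pow_pos (show (0:ℝ) < 2 by norm_num) (d+1)]
      · have h2 : (1 + ‖w‖)^(d+1) ≤ (2 * ‖w‖)^(d+1) :=
          pow_le_pow_left₀ (by positivity) (by linarith) _
        rw [mul_pow] at h2
        nlinarith [pow_pos (show (0:ℝ) < 2 by norm_num) (d+1)]
    calc ‖𝓕 f w‖ * (1 + ‖w‖)^(d+1) ≤ ‖𝓕 f w‖ * (2^(d+1) * (1 + ‖w‖^(d+1))) :=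
          mul_le_mul_of_nonneg_left hsplit hFn
      _ = 2^(d+1) * (‖𝓕 f w‖ + ‖w‖^(d+1) * ‖𝓕 f w‖) := by ring
      _ ≤ 2^(d+1) * (2^(d+1) * M * IB d + 2^(d+1) * ((d+2) * (2^(d+1) * M * IB d))) := by
          gcongr
      _ = Cd d * M := by
          unfold Cd
          have : (4:ℝ)^(d+1) = 2^(d+1) * 2^(d+1) := by
            rw [← mul_pow]; norm_num
          rw [this]; push_cast; ring
  have h1w : (0:ℝ) < (1 + ‖w‖)^(d+1) := by positivity
  rw [show Cd d * M * ((1 + ‖w‖)^(d+1))⁻¹ = (Cd d * M) / ((1 + ‖w‖)^(d+1)) by ring,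
    le_div_iff₀ h1w]
  exact hkey

lemma f_integrable {d : ℕ} {M : ℝ} {f : EuclideanSpace ℝ (Fin d) → ℂ}
    (hf : ContDiff ℝ (d + 1) f)
    (hb : ∀ (n : ℕ) (ξ : EuclideanSpace ℝ (Fin d)), n ≤ d + 1 →
      ‖iteratedFDeriv ℝ n f ξ‖ * Real.sqrt (1 + ‖ξ‖ ^ 2) ^ (d + 1) ≤ M) :
    Integrable f volume := by
  refine ((B_integrable d).const_mul (2^(d+1) * M)).mono' hf.continuous.aestronglyMeasurable
    (Filter.Eventually.of_forall fun ξ ↦ ?_)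
  rw [← norm_iteratedFDeriv_zero (𝕜 := ℝ)]
  simpa [mul_assoc] using deriv_bound hb (Nat.zero_le _) ξ

lemma Ff_integrable {d : ℕ} {M : ℝ} {f : EuclideanSpace ℝ (Fin d) → ℂ}
    (hf : ContDiff ℝ (d + 1) f)
    (hb : ∀ (n : ℕ) (ξ : EuclideanSpace ℝ (Fin d)), n ≤ d + 1 →
      ‖iteratedFDeriv ℝ n f ξ‖ * Real.sqrt (1 + ‖ξ‖ ^ 2) ^ (d + 1) ≤ M) :
    Integrable (𝓕 f) volume := by
  have hcont : Continuous (𝓕 f) :=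
    VectorFourier.fourierIntegral_continuous Real.continuous_fourierChar
      (by exact continuous_inner) (f_integrable hf hb)
  refine ((B_integrable d).const_mul (Cd d * M)).mono' hcont.aestronglyMeasurable
    (Filter.Eventually.of_forall fun w ↦ ?_)
  simpa [mul_assoc] using kernel_decay hf hb w

lemma ft_integrable (d : ℕ) (u : SchwartzMap (EuclideanSpace ℝ (Fin d)) ℂ) :
    Integrable (ft d u) volume := by
  have : Integrable (𝓕 (u : EuclideanSpace ℝ (Fin d) → ℂ)) volume := by
    rw [← SchwartzMap.fourier_coe, ← SchwartzMap.fourierTransformCLM_apply (𝕜 := ℂ)]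
    exact (SchwartzMap.fourierTransformCLM ℂ u).integrable
  have h2 := this.comp_smul (R := (2*π)⁻¹)
    (by simp [Real.pi_ne_zero])
  exact h2.congr (Filter.Eventually.of_forall fun ξ ↦ (ft_eq d u ξ).symm)

lemma ft_continuous (d : ℕ) (u : SchwartzMap (EuclideanSpace ℝ (Fin d)) ℂ) :
    Continuous (ft d u) := by
  have hcont : Continuous (𝓕 (u : EuclideanSpace ℝ (Fin d) → ℂ)) :=
    VectorFourier.fourierIntegral_continuous Real.continuous_fourierChar
      (by exact continuous_inner) u.integrable
  have : Continuous fun ξ : EuclideanSpace ℝ (Fin d) ↦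
      𝓕 (u : EuclideanSpace ℝ (Fin d) → ℂ) ((2*π)⁻¹ • ξ) :=
    hcont.comp (continuous_const_smul _)
  exact this.congr fun ξ ↦ (ft_eq d u ξ).symm

lemma oph_rep {d : ℕ} {M : ℝ} {f : EuclideanSpace ℝ (Fin d) → ℂ}
    (hf : ContDiff ℝ (d + 1) f)
    (hb : ∀ (n : ℕ) (ξ : EuclideanSpace ℝ (Fin d)), n ≤ d + 1 →
      ‖iteratedFDeriv ℝ n f ξ‖ * Real.sqrt (1 + ‖ξ‖ ^ 2) ^ (d + 1) ≤ M)
    (h : ℝ) (u : SchwartzMap (EuclideanSpace ℝ (Fin d)) ℂ) (x : EuclideanSpace ℝ (Fin d)) :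
    ((((2 * π) ^ d)⁻¹ : ℝ) : ℂ) *
      ∫ ξ, Complex.exp (Complex.I * ((inner ℝ x ξ : ℝ) : ℂ)) * f (h • ξ) * ft d u ξ
      = ∫ w, 𝓕 f w * u (x + (2*π*h) • w) := by
  have hfi := f_integrable hf hb
  have hFfi := Ff_integrable hf hb
  have hfti := ft_integrable d u
  -- inversion for f
  have inv : ∀ η, f η = ∫ w, Complex.exp ((↑(2*π*⟪w,η⟫) : ℂ) * Complex.I) * 𝓕 f w := by
    intro η
    conv_lhs => rw [← congrFun (hf.continuous.fourierInv_fourier_eq hfi hFfi) η]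
    rw [Real.fourierInv_eq']
    simp_rw [smul_eq_mul]
  set F : EuclideanSpace ℝ (Fin d) → EuclideanSpace ℝ (Fin d) → ℂ := fun ξ w ↦
    Complex.exp (Complex.I * ((inner ℝ x ξ : ℝ) : ℂ)) *
      (Complex.exp ((↑(2*π*(h*⟪w,ξ⟫)) : ℂ) * Complex.I) * 𝓕 f w) * ft d u ξ with hF
  have step1 : ∀ ξ, Complex.exp (Complex.I * ((inner ℝ x ξ : ℝ) : ℂ)) * f (h • ξ) * ft d u ξ
      = ∫ w, F ξ w := by
    intro ξ
    rw [inv (h • ξ)]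
    simp_rw [real_inner_smul_right]
    rw [← integral_const_mul, ← integral_mul_const]
  rw [integral_congr_ae (Filter.Eventually.of_forall step1)]
  -- integrability on the product
  have hFint : Integrable (Function.uncurry F) (volume.prod volume) := by
    have hcont : Continuous (Function.uncurry F) := by
      apply Continuous.mul
      apply Continuous.mul
      · apply Complex.continuous_exp.comp
        exact (continuous_const.mul (Complex.continuous_ofReal.comp
          ((continuous_inner (𝕜 := ℝ)).comp
            (continuous_const.prodMk continuous_fst))))
      · apply Continuous.mul
        · apply Complex.continuous_exp.comp
          apply Continuous.mul _ continuous_const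
          apply Complex.continuous_ofReal.comp
          exact (continuous_const.mul ((continuous_const.mul
            ((continuous_inner (𝕜 := ℝ)).comp (continuous_snd.prodMk continuous_fst)))))
        · exact (VectorFourier.fourierIntegral_continuous Real.continuous_fourierChar
            (by exact continuous_inner) hfi).comp continuous_snd
      · exact (ft_continuous d u).comp continuous_fst
    refine (hfti.norm.mul_prod hFfi.norm).mono' hcont.aestronglyMeasurable
      (Filter.Eventually.of_forall fun z ↦ ?_)
    rcases z with ⟨ξ, w⟩
    simp only [Function.uncurry, hF, norm_mul]
    rw [show Complex.I * ((inner ℝ x ξ : ℝ) : ℂ) = ((inner ℝ x ξ : ℝ) : ℂ) * Complex.I from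
      mul_comm _ _]
    rw [Complex.norm_exp_ofReal_mul_I]
    rw [Complex.norm_exp_ofReal_mul_I]
    simp [norm_mul, mul_comm]
  rw [integral_integral_swap hFint]
  -- inner integral per w
  have step2 : ∀ w, (∫ ξ, F ξ w)
      = (((2*π)^d : ℝ) : ℂ) * (𝓕 f w * u (x + (2*π*h) • w)) := by
    intro w
    have ptw : ∀ ξ, F ξ w = 𝓕 f w *
        (Complex.exp (Complex.I * ((inner ℝ (x + (2*π*h) • w) ξ : ℝ) : ℂ)) * ft d u ξ) := by
      intro ξ
      rw [hF]
      simp only []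
      rw [inner_add_left, real_inner_smul_left]
      push_cast
      rw [mul_add, Complex.exp_add]
      ring
    rw [integral_congr_ae (Filter.Eventually.of_forall ptw), integral_const_mul,
      schwartz_inversion d u (x + (2*π*h) • w)]
    ring
  rw [integral_congr_ae (Filter.Eventually.of_forall fun w ↦ step2 w), integral_const_mul]
  rw [← mul_assoc]
  have hne : (((2*π)^d : ℝ) : ℂ) ≠ 0 := by
    simp [pow_ne_zero, Real.pi_ne_zero]
  have hcancel : (((2 * π) ^ d)⁻¹ : ℝ) * ((2*π)^d : ℝ) = 1 := inv_mul_cancel₀ (by positivity)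
  rw [← Complex.ofReal_mul, hcancel, Complex.ofReal_one, one_mul]

/-- Semiclassical quantization
`Op^h(a) u(x) = (2π)^{-d} ∫ e^{i x·ξ} a(x, hξ) û(ξ) dξ`. -/
def Oph (d : ℕ) (a : EuclideanSpace ℝ (Fin d) → EuclideanSpace ℝ (Fin d) → ℂ) (h : ℝ)
    (u : EuclideanSpace ℝ (Fin d) → ℂ) (x : EuclideanSpace ℝ (Fin d)) : ℂ :=
  (((2 * Real.pi) ^ d)⁻¹ : ℝ) *
    ∫ ξ, Complex.exp (Complex.I * ((inner ℝ x ξ : ℝ) : ℂ)) * a x (h • ξ) * ft d u ξ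

/-- **L² boundedness of semiclassical operators.** If
`M := max_{|β| ≤ d+1} ess sup |∂_ξ^β a(x,ξ)| ⟨ξ⟩^{d+1} < ∞,` then for every `h ∈ (0,1]`,
`Op^h(a)` (defined on Schwartz functions) is bounded on `L²(ℝᵈ)` with norm `≤ C_d M`,
uniformly in `h`. -/
theorem oph_L2_bounded (d : ℕ) :
    ∃ C > 0, ∀ (M : ℝ) (a : EuclideanSpace ℝ (Fin d) → EuclideanSpace ℝ (Fin d) → ℂ),
      Measurable (Function.uncurry a) →
      (∀ᵐ x ∂(volume : Measure (EuclideanSpace ℝ (Fin d))),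
        ContDiff ℝ (d + 1) (a x) ∧
        ∀ (n : ℕ) (ξ : EuclideanSpace ℝ (Fin d)), n ≤ d + 1 →
          ‖iteratedFDeriv ℝ n (a x) ξ‖ * Real.sqrt (1 + ‖ξ‖ ^ 2) ^ (d + 1) ≤ M) →
      ∀ h : ℝ, h ∈ Set.Ioc (0 : ℝ) 1 →
      ∀ u : SchwartzMap (EuclideanSpace ℝ (Fin d)) ℂ,
        eLpNorm (Oph d a h u) 2 volume ≤
          ENNReal.ofReal (C * M) * eLpNorm (u : EuclideanSpace ℝ (Fin d) → ℂ) 2 volume := by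
  refine ⟨Cd d * IB d + 1, by have h1 : 0 ≤ Cd d * IB d := by { rw [IB]; exact mul_nonneg (Cd_nonneg d) (IB_nonneg d) }; linarith, ?_⟩
  intro M a _ha hae h _hh u
  -- M is nonnegative
  have hvol : (volume : Measure (EuclideanSpace ℝ (Fin d))) ≠ 0 :=
    Measure.measure_univ_ne_zero.1 (isOpen_univ.measure_pos volume ⟨0, trivial⟩).ne'
  haveI := ae_neBot.2 hvol
  obtain ⟨x₀, hx₀⟩ := hae.exists
  have hM : 0 ≤ M := by
    have h0 := hx₀.2 0 0 (by omega)
    have : (0:ℝ) ≤ ‖iteratedFDeriv ℝ 0 (a x₀) 0‖ * Real.sqrt (1 + ‖(0:EuclideanSpace ℝ (Fin d))‖ ^ 2) ^ (d + 1) := by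
      positivity
    linarith
  set c : ℝ := 2 * π * h with hc
  set gE : EuclideanSpace ℝ (Fin d) → ℝ≥0∞ :=
    fun w ↦ ENNReal.ofReal (Cd d * M * ((1 + ‖w‖) ^ (d+1))⁻¹) with hgE
  have hKcont : Continuous fun w : EuclideanSpace ℝ (Fin d) ↦
      Cd d * M * ((1 + ‖w‖) ^ (d+1))⁻¹ := by
    apply continuous_const.mul
    apply Continuous.inv₀
    · exact (continuous_const.add continuous_norm).pow _
    · intro w; positivity
  have hgEmeas : Measurable gE := ENNReal.measurable_ofReal.comp hKcont.measurable
  set A : ℝ≥0∞ := ∫⁻ w, gE w with hA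
  have hAval : A = ENNReal.ofReal (Cd d * M * IB d) := by
    rw [hA, hgE]
    rw [← ofReal_integral_eq_lintegral_ofReal ((B_integrable d).const_mul (Cd d * M))
      (Filter.Eventually.of_forall fun w ↦ by have := Cd_nonneg d; positivity)]
    rw [integral_const_mul, IB]
  have hAne : A ≠ ∞ := by rw [hAval]; exact ENNReal.ofReal_ne_top
  set U : EuclideanSpace ℝ (Fin d) → EuclideanSpace ℝ (Fin d) → ℝ≥0∞ :=
    fun x w ↦ (‖u (x + c • w)‖₊ : ℝ≥0∞) with hU
  have hUmeas : ∀ x, Measurable (U x) := fun x ↦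
    (u.continuous.comp (continuous_const.add (continuous_id.const_smul c))).measurable.nnnorm.coe_nnreal_ennreal
  -- Step A: a.e. pointwise bound
  have hrep : ∀ᵐ x ∂(volume : Measure (EuclideanSpace ℝ (Fin d))),
      (‖Oph d a h u x‖₊ : ℝ≥0∞) ≤ ∫⁻ w, gE w * U x w := by
    filter_upwards [hae] with x hx
    have hOph : Oph d a h u x = ∫ w, 𝓕 (a x) w * u (x + c • w) :=
      oph_rep hx.1 hx.2 h u x
    rw [hOph]
    refine le_trans (enorm_integral_le_lintegral_enorm _) (lintegral_mono fun w ↦ ?_)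
    rw [enorm_mul]
    refine mul_le_mul_left ?_ _
    rw [← ofReal_norm]
    exact ENNReal.ofReal_le_ofReal (kernel_decay hx.1 hx.2 w)
  -- Step B: Cauchy-Schwarz
  have hCS : ∀ x, (∫⁻ w, gE w * U x w) ^ (2:ℝ) ≤ A * ∫⁻ w, gE w * U x w ^ (2:ℝ) := by
    intro x
    have hpq : Real.HolderConjugate 2 2 := Real.HolderConjugate.two_two
    have key := ENNReal.lintegral_mul_le_Lp_mul_Lq volume hpq
      (f := fun w ↦ gE w ^ (1/2:ℝ)) (g := fun w ↦ gE w ^ (1/2:ℝ) * U x w)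
      (hgEmeas.pow_const _).aemeasurable
      ((hgEmeas.pow_const _).mul (hUmeas x)).aemeasurable
    have heq1 : ∀ w, (fun w ↦ gE w ^ (1/2:ℝ)) w * (fun w ↦ gE w ^ (1/2:ℝ) * U x w) w
        = gE w * U x w := by
      intro w
      rw [← mul_assoc, ← ENNReal.rpow_add_of_nonneg _ _ (by norm_num) (by norm_num)]
      norm_num
    have heq2 : ∀ w, ((gE w ^ (1/2:ℝ)) ^ (2:ℝ)) = gE w := by
      intro w
      rw [← ENNReal.rpow_mul]
      norm_num
    have heq3 : ∀ w, ((gE w ^ (1/2:ℝ) * U x w) ^ (2:ℝ)) = gE w * U x w ^ (2:ℝ) := by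
      intro w
      rw [ENNReal.mul_rpow_of_nonneg _ _ (by norm_num : (0:ℝ) ≤ 2), ← ENNReal.rpow_mul]
      norm_num
    simp only [Pi.mul_apply, heq1] at key
    calc (∫⁻ w, gE w * U x w) ^ (2:ℝ)
        ≤ ((∫⁻ w, (gE w ^ (1/2:ℝ)) ^ (2:ℝ)) ^ (1/2:ℝ)
            * (∫⁻ w, (gE w ^ (1/2:ℝ) * U x w) ^ (2:ℝ)) ^ (1/2:ℝ)) ^ (2:ℝ) := by
          apply ENNReal.rpow_le_rpow _ (by norm_num)
          convert key using 2 <;> norm_num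
      _ = A * ∫⁻ w, gE w * U x w ^ (2:ℝ) := by
          simp_rw [heq2, heq3]
          rw [ENNReal.mul_rpow_of_nonneg _ _ (by norm_num : (0:ℝ) ≤ 2),
            ← ENNReal.rpow_mul, ← ENNReal.rpow_mul]
          norm_num
          rw [← hA]
  -- Step C: integrate in x
  set L : ℝ≥0∞ := ∫⁻ y, (‖u y‖₊ : ℝ≥0∞) ^ (2:ℝ) with hL
  have hC : (∫⁻ x, (‖Oph d a h u x‖₊ : ℝ≥0∞) ^ (2:ℝ)) ≤ A * A * L := by
    have step : (∫⁻ x, (‖Oph d a h u x‖₊ : ℝ≥0∞) ^ (2:ℝ))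
        ≤ ∫⁻ x, A * ∫⁻ w, gE w * U x w ^ (2:ℝ) := by
      refine lintegral_mono_ae ?_
      filter_upwards [hrep] with x hx
      exact le_trans (ENNReal.rpow_le_rpow hx (by norm_num)) (hCS x)
    refine step.trans ?_
    rw [lintegral_const_mul' _ _ hAne]
    have hswap : (∫⁻ x, ∫⁻ w, gE w * U x w ^ (2:ℝ))
        = ∫⁻ w, ∫⁻ x, gE w * U x w ^ (2:ℝ) := by
      refine lintegral_lintegral_swap ?_
      apply Measurable.aemeasurable
      apply Measurable.mul
      · exact hgEmeas.comp measurable_snd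
      · have : Continuous fun z : EuclideanSpace ℝ (Fin d) × EuclideanSpace ℝ (Fin d) ↦
            u (z.1 + c • z.2) := u.continuous.comp (continuous_fst.add (continuous_snd.const_smul c))
        exact this.measurable.nnnorm.coe_nnreal_ennreal.pow_const _
    rw [hswap]
    have htrans : ∀ w, (∫⁻ x, gE w * U x w ^ (2:ℝ)) = gE w * L := by
      intro w
      rw [lintegral_const_mul' _ _ (ENNReal.ofReal_ne_top)]
      congr 1
      rw [hL]
      exact lintegral_add_right_eq_self (fun y ↦ (‖u y‖₊ : ℝ≥0∞) ^ (2:ℝ)) (c • w)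
    simp_rw [htrans]
    rw [lintegral_mul_const _ hgEmeas, ← hA, mul_assoc]
  -- Step D: conclude
  have h2z : (2:ℝ≥0∞) ≠ 0 := by norm_num
  have h2t : (2:ℝ≥0∞) ≠ ∞ := by norm_num
  rw [eLpNorm_eq_lintegral_rpow_enorm_toReal h2z h2t, eLpNorm_eq_lintegral_rpow_enorm_toReal h2z h2t]
  simp only [ENNReal.toReal_ofNat]
  have hAle : A ≤ ENNReal.ofReal ((Cd d * IB d + 1) * M) := by
    rw [hAval]
    apply ENNReal.ofReal_le_ofReal
    ring_nf
    nlinarith [hM]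
  calc (∫⁻ x, (‖Oph d a h (u : EuclideanSpace ℝ (Fin d) → ℂ) x‖₊ : ℝ≥0∞) ^ (2:ℝ)) ^ (1/(2:ℝ))
      ≤ (A * A * L) ^ (1/(2:ℝ)) := ENNReal.rpow_le_rpow hC (by norm_num)
    _ = A * L ^ (1/(2:ℝ)) := by
        rw [ENNReal.mul_rpow_of_nonneg _ _ (by norm_num : (0:ℝ) ≤ 1/2)]
        congr 1
        rw [← pow_two, ← ENNReal.rpow_natCast A 2, ← ENNReal.rpow_mul]
        norm_num
    _ ≤ ENNReal.ofReal ((Cd d * IB d + 1) * M) * L ^ (1/(2:ℝ)) := mul_le_mul_left hAle _
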